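/- Deterministic localization of the weighted CUSUM maximizer under noise control (Step Four of the proof of Theorem 2). Suppose μ ∈ ℝ^N has a single change at τ on [s,e] with κ = |α − β| > 0, let ε ∈ ℝ^N, set Y = μ + ε, and fix r > 0. Assume that for every s ≤ b < e: |⟨ε, ψ_{s,e}^{b}⟩_w| ≤ r, and |⟨v_b, ε⟩_w| ≤ r·‖v_b‖_w whenever v_b := ψ_{s,e}^{τ}·⟨ψ_{s,e}^{τ}, μ⟩_w − ψ_{s,e}^{b}·⟨ψ_{s,e}^{b}, μ⟩_w ≠ 0. If min{S^w_{s:τ}, S^w_{(τ+1):e}}·κ² > 2(1+√2)²·r², then every maximizer b̂ of b ↦ W_{s,e}^{Y}(b) over s ≤ b < e satisfies Σ_{i : min(τ,b̂) < i ≤ max(τ,b̂)} w_i ≤ 2(1+√2)²·r²/κ². -/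

import Mathlib

open MeasureTheory ProbabilityTheory

/-- Cumulative weight `S^w_{u:v} = Σ_{i=u}^{v} w_i`. -/
noncomputable def Sw (w : ℕ → ℝ) (u v : ℕ) : ℝ := ∑ i ∈ Finset.Icc u v, w i

/-- Weighted inner product `⟨x,y⟩_w = Σ_{i=1}^{N} w_i x_i y_i`. -/
noncomputable def winner (N : ℕ) (w x y : ℕ → ℝ) : ℝ :=
  ∑ i ∈ Finset.Icc 1 N, w i * x i * y i

/-- Weighted norm `‖x‖_w = ⟨x,x⟩_w^{1/2}`. -/
noncomputable def wnorm (N : ℕ) (w x : ℕ → ℝ) : ℝ := Real.sqrt (winner N w x x)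

/-- Weighted CUSUM statistic `W_{s,e}^{v}(b)`. -/
noncomputable def wCUSUM (w v : ℕ → ℝ) (s e b : ℕ) : ℝ :=
  Real.sqrt (Sw w s b * Sw w (b + 1) e / Sw w s e) *
    |(Sw w s b)⁻¹ * ∑ i ∈ Finset.Icc s b, w i * v i
      - (Sw w (b + 1) e)⁻¹ * ∑ i ∈ Finset.Icc (b + 1) e, w i * v i|

/-- The CUSUM contrast vector `ψ_{s,e}^{b}`. -/
noncomputable def psiContrast (w : ℕ → ℝ) (s e b : ℕ) (i : ℕ) : ℝ :=
  if s ≤ i ∧ i ≤ b then Real.sqrt (Sw w (b + 1) e / (Sw w s b * Sw w s e))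
  else if b < i ∧ i ≤ e then -Real.sqrt (Sw w s b / (Sw w s e * Sw w (b + 1) e))
  else 0

/-!
Write `A_b = ⟨ψ^b, μ⟩_w` and `ρ_b = ⟨ψ^τ, ψ^b⟩_w`. Every `ψ^b` is a unit vector orthogonal to the
constants, and on `[s, e]` the signal is its mean plus `A_τ ψ^τ`; hence `A_b = A_τ ρ_b`, and
`v_b = A_τ ψ^τ - A_b ψ^b` satisfies `‖v_b‖² = ⟨v_b, μ⟩_w = A_τ² - A_b² = A_τ² (1 - ρ_b²)`.
For `b ≤ b'` the correlations have the closed form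
`⟨ψ^{b'}, ψ^b⟩_w² = S_{s:b} S_{(b'+1):e} / (S_{s:b'} S_{(b+1):e})`, so `‖v_b‖² = κ² GH/(G+H)`,
where `G` is the weight between `b` and `τ` and `H` the weight of the segment beyond `τ`.

On the other hand, let `b = b̂`, `t = ‖v_b‖_w`, `y_b = ⟨Y, ψ^b⟩_w`, and flip signs so that
`A_τ > 0`; then `A_b ≥ 0` because `ρ_b ≥ 0`. Maximality gives `|y_τ| ≤ |y_b|`, and the noise
bounds give `t² - r t ≤ ⟨v_b, Y⟩_w = A_τ y_τ - A_b y_b ≤ (A_τ - A_b)(A_b + r)`. Since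
`t² = (A_τ - A_b)(A_τ + A_b)`, this rearranges to `t A_τ ≤ r (t + A_τ + A_b)`, and
`t + A_b ≤ √2 A_τ` (as `t² + A_b² = A_τ²`) yields `t ≤ (1 + √2) r`, which is incompatible with
the lower bound on `‖v_b‖` when `G` is large.
-/

open Finset

theorem sum_Icc_consecutive (f : ℕ → ℝ) {u m v : ℕ} (hum : u ≤ m + 1) (hmv : m ≤ v) :
    ∑ i ∈ Icc u m, f i + ∑ i ∈ Icc (m + 1) v, f i = ∑ i ∈ Icc u v, f i := by
  simp only [← Ico_add_one_right_eq_Icc]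
  exact sum_Ico_consecutive f hum (by omega)

theorem sqrt_mul_div_div_self {a : ℝ} (ha : 0 < a) (b c : ℝ) :
    √(a * b / c) / a = √(b / (a * c)) := by
  rw [div_eq_iff ha.ne', ← Real.sqrt_sq ha.le, ← Real.sqrt_mul' _ (sq_nonneg a),
    Real.sqrt_sq ha.le]
  congr 1
  field_simp

theorem le_one_add_sqrt_two_mul_of_pos {a c t y₁ y₂ r : ℝ} (ha : 0 < a) (hc : 0 ≤ c)
    (ht : 0 ≤ t) (hpyth : a ^ 2 = c ^ 2 + t ^ 2) (hy₁ : |y₁ - a| ≤ r) (hy₂ : |y₂ - c| ≤ r)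
    (hmax : |y₁| ≤ |y₂|) (hv : t ^ 2 - r * t ≤ a * y₁ - c * y₂) : t ≤ (1 + √2) * r := by
  by_contra! hlt
  obtain ⟨hy₁l, hy₁u⟩ := abs_le.1 hy₁
  obtain ⟨hy₂l, hy₂u⟩ := abs_le.1 hy₂
  have hr : 0 ≤ r := (abs_nonneg _).trans hy₁
  have hsqrt2 : 1 < √2 := by rw [Real.lt_sqrt zero_le_one]; norm_num
  have h2r : 2 * r < t := by nlinarith
  have hta : t ≤ a := by nlinarith
  have hca : c ≤ a := by nlinarith
  have hy₁y₂ : y₁ ≤ y₂ := by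
    have hy₁r : r < y₁ := by linarith
    rw [abs_of_pos (hr.trans_lt hy₁r)] at hmax
    rcases le_or_gt y₂ 0 with hy₂0 | hy₂0
    · rw [abs_of_nonpos hy₂0] at hmax
      linarith
    · rwa [abs_of_pos hy₂0] at hmax
  -- t² - r t ≤ a y₁ - c y₂ ≤ (a - c) y₂ ≤ (a - c)(c + r), and t² = (a - c)(a + c)
  have hac_r : (a - c) * (a - r) ≤ r * t := by
    nlinarith [mul_le_mul_of_nonneg_left hy₁y₂ ha.le,
      mul_le_mul_of_nonneg_left hy₂u (sub_nonneg.2 hca)]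
  have hta_r : t * a ≤ r * (t + a + c) := by
    have ht0 : 0 < t := by linarith
    nlinarith [mul_le_mul_of_nonneg_right hac_r (by linarith : 0 ≤ a + c)]
  have htc : t + c ≤ √2 * a := by
    rw [← Real.sqrt_sq ha.le, ← Real.sqrt_mul zero_le_two,
      Real.le_sqrt (by linarith) (by positivity)]
    nlinarith [sq_nonneg (t - c)]
  nlinarith [mul_le_mul_of_nonneg_left htc hr]

theorem le_one_add_sqrt_two_mul {a c t y₁ y₂ r : ℝ} (hac : 0 ≤ a * c)
    (ht : 0 ≤ t) (hpyth : a ^ 2 = c ^ 2 + t ^ 2) (hy₁ : |y₁ - a| ≤ r) (hy₂ : |y₂ - c| ≤ r)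
    (hmax : |y₁| ≤ |y₂|) (hv : t ^ 2 - r * t ≤ a * y₁ - c * y₂) : t ≤ (1 + √2) * r := by
  rcases lt_trichotomy a 0 with ha | rfl | ha
  · refine le_one_add_sqrt_two_mul_of_pos (a := -a) (c := -c) (y₁ := -y₁) (y₂ := -y₂)
      (neg_pos.2 ha) (neg_nonneg.2 (nonpos_of_mul_nonneg_right hac ha)) ht
      (by linear_combination hpyth) ?_ ?_
      (by rwa [abs_neg, abs_neg]) (by linear_combination hv)
    · rwa [neg_sub_neg, abs_sub_comm]
    · rwa [neg_sub_neg, abs_sub_comm]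
  · have ht0 : t = 0 := by nlinarith
    have hr : 0 ≤ r := (abs_nonneg _).trans hy₁
    rw [ht0]
    positivity
  · exact le_one_add_sqrt_two_mul_of_pos ha (nonneg_of_mul_nonneg_right hac ha) ht hpyth hy₁ hy₂
      hmax hv

theorem lt_mul_mul_div_add {G H k c : ℝ} (hc : 0 ≤ c) (hk : 0 ≤ k) (hG : 2 * c < G * k)
    (hH : 2 * c < H * k) : c < k * (G * H / (G + H)) := by
  have hG0 : 0 < G := pos_of_mul_pos_left (by linarith) hk
  have hH0 : 0 < H := pos_of_mul_pos_left (by linarith) hk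
  rw [mul_div_assoc', lt_div_iff₀ (by positivity)]
  nlinarith [mul_lt_mul_of_pos_right hG hH0, mul_lt_mul_of_pos_right hH hG0]

section WeightedSums

variable {w : ℕ → ℝ} {u m v : ℕ}

theorem Sw_pos (hw : ∀ i, 0 < w i) (huv : u ≤ v) : 0 < Sw w u v :=
  sum_pos (fun i _ => hw i) (nonempty_Icc.2 huv)

theorem Sw_add_Sw (hum : u ≤ m + 1) (hmv : m ≤ v) : Sw w u m + Sw w (m + 1) v = Sw w u v :=
  sum_Icc_consecutive w hum hmv

theorem sum_mul_eq_mul_Sw {x : ℕ → ℝ} {c : ℝ} (hx : ∀ i, u ≤ i → i ≤ v → x i = c) :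
    ∑ i ∈ Icc u v, w i * x i = Sw w u v * c := by
  rw [Sw, sum_mul]
  exact sum_congr rfl fun i hi => by rw [hx i (mem_Icc.1 hi).1 (mem_Icc.1 hi).2]

end WeightedSums

section WeightedInner

variable {N : ℕ} {w : ℕ → ℝ}

theorem winner_comm (x y : ℕ → ℝ) : winner N w x y = winner N w y x :=
  sum_congr rfl fun _ _ => by ring

theorem winner_add_left (x y z : ℕ → ℝ) :
    winner N w (fun i => x i + y i) z = winner N w x z + winner N w y z := by
  simp only [winner, ← sum_add_distrib]
  exact sum_congr rfl fun _ _ => by ring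

theorem winner_mul_left (x z : ℕ → ℝ) (a : ℝ) :
    winner N w (fun i => x i * a) z = a * winner N w x z := by
  simp only [winner, mul_sum]
  exact sum_congr rfl fun _ _ => by ring

theorem winner_sub_left (x y z : ℕ → ℝ) :
    winner N w (fun i => x i - y i) z = winner N w x z - winner N w y z := by
  simp only [winner, ← sum_sub_distrib]
  exact sum_congr rfl fun _ _ => by ring

theorem winner_self_nonneg (hw : ∀ i, 0 ≤ w i) (x : ℕ → ℝ) : 0 ≤ winner N w x x :=
  sum_nonneg fun i _ => by rw [mul_assoc]; exact mul_nonneg (hw i) (mul_self_nonneg _)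

theorem wnorm_sq (hw : ∀ i, 0 ≤ w i) (x : ℕ → ℝ) : wnorm N w x ^ 2 = winner N w x x :=
  Real.sq_sqrt (winner_self_nonneg hw x)

theorem winner_mul_sub_mul_self {x y : ℕ → ℝ} {a b : ℝ} (hx : winner N w x x = 1)
    (hy : winner N w y y = 1) (hb : b = a * winner N w x y) :
    winner N w (fun i => x i * a - y i * b) (fun i => x i * a - y i * b) = a ^ 2 - b ^ 2 := by
  have hvx : winner N w (fun i => x i * a - y i * b) x = a - b * winner N w x y := by
    rw [winner_sub_left, winner_mul_left, winner_mul_left, hx, winner_comm y]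
    ring
  have hvy : winner N w (fun i => x i * a - y i * b) y = a * winner N w x y - b := by
    rw [winner_sub_left, winner_mul_left, winner_mul_left, hy]
    ring
  rw [winner_sub_left, winner_mul_left, winner_mul_left, winner_comm x, winner_comm y, hvx, hvy, hb]
  ring

end WeightedInner

section Contrast

variable {N : ℕ} {w : ℕ → ℝ} {s e b i : ℕ}

theorem psiContrast_of_le (hw : ∀ i, 0 < w i) (hsi : s ≤ i) (hib : i ≤ b) :
    psiContrast w s e b i = √(Sw w s b * Sw w (b + 1) e / Sw w s e) / Sw w s b := by
  rw [psiContrast, if_pos ⟨hsi, hib⟩, sqrt_mul_div_div_self (Sw_pos hw (hsi.trans hib))]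

theorem psiContrast_of_lt (hw : ∀ i, 0 < w i) (hbi : b < i) (hie : i ≤ e) :
    psiContrast w s e b i = -(√(Sw w s b * Sw w (b + 1) e / Sw w s e) / Sw w (b + 1) e) := by
  rw [psiContrast, if_neg (by omega), if_pos ⟨hbi, hie⟩, mul_comm (Sw w s b),
    sqrt_mul_div_div_self (Sw_pos hw (by omega)), mul_comm (Sw w (b + 1) e)]

theorem psiContrast_of_notMem (hsb : s ≤ b) (hbe : b < e) (hi : i ∉ Icc s e) :
    psiContrast w s e b i = 0 := by
  rw [mem_Icc] at hi
  rw [psiContrast, if_neg (by omega), if_neg (by omega)]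

theorem winner_psiContrast_eq_sum_Icc (hs : 1 ≤ s) (heN : e ≤ N) (hsb : s ≤ b) (hbe : b < e)
    (x : ℕ → ℝ) :
    winner N w x (psiContrast w s e b) = ∑ i ∈ Icc s e, w i * x i * psiContrast w s e b i :=
  (sum_subset (Icc_subset_Icc hs heN) fun _ _ hi => by
    rw [psiContrast_of_notMem hsb hbe hi, mul_zero]).symm

theorem winner_psiContrast_congr (hs : 1 ≤ s) (heN : e ≤ N) (hsb : s ≤ b) (hbe : b < e)
    {x y : ℕ → ℝ} (hxy : ∀ i ∈ Icc s e, x i = y i) :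
    winner N w x (psiContrast w s e b) = winner N w y (psiContrast w s e b) := by
  rw [winner_psiContrast_eq_sum_Icc hs heN hsb hbe, winner_psiContrast_eq_sum_Icc hs heN hsb hbe]
  exact sum_congr rfl fun i hi => by rw [hxy i hi]

theorem winner_psiContrast (hw : ∀ i, 0 < w i) (hs : 1 ≤ s) (heN : e ≤ N) (hsb : s ≤ b)
    (hbe : b < e) (x : ℕ → ℝ) :
    winner N w x (psiContrast w s e b) =
      √(Sw w s b * Sw w (b + 1) e / Sw w s e) *
        ((Sw w s b)⁻¹ * ∑ i ∈ Icc s b, w i * x i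
          - (Sw w (b + 1) e)⁻¹ * ∑ i ∈ Icc (b + 1) e, w i * x i) := by
  set k := √(Sw w s b * Sw w (b + 1) e / Sw w s e)
  have hleft : ∑ i ∈ Icc s b, w i * x i * psiContrast w s e b i
      = (∑ i ∈ Icc s b, w i * x i) * (k / Sw w s b) := by
    rw [sum_mul]
    exact sum_congr rfl fun i hi => by rw [psiContrast_of_le hw (mem_Icc.1 hi).1 (mem_Icc.1 hi).2]
  have hright : ∑ i ∈ Icc (b + 1) e, w i * x i * psiContrast w s e b i
      = (∑ i ∈ Icc (b + 1) e, w i * x i) * -(k / Sw w (b + 1) e) := by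
    rw [sum_mul]
    exact sum_congr rfl fun i hi => by
      rw [psiContrast_of_lt hw (mem_Icc.1 hi).1 (mem_Icc.1 hi).2]
  rw [winner_psiContrast_eq_sum_Icc hs heN hsb hbe, ← sum_Icc_consecutive _ (by omega) hbe.le,
    hleft, hright]
  ring

theorem wCUSUM_eq_abs_winner (hw : ∀ i, 0 < w i) (hs : 1 ≤ s) (heN : e ≤ N) (hsb : s ≤ b)
    (hbe : b < e) (x : ℕ → ℝ) :
    wCUSUM w x s e b = |winner N w x (psiContrast w s e b)| := by
  rw [winner_psiContrast hw hs heN hsb hbe, abs_mul, abs_of_nonneg (Real.sqrt_nonneg _), wCUSUM]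

theorem winner_const_psiContrast (hw : ∀ i, 0 < w i) (hs : 1 ≤ s) (heN : e ≤ N) (hsb : s ≤ b)
    (hbe : b < e) (c : ℝ) : winner N w (fun _ => c) (psiContrast w s e b) = 0 := by
  rw [winner_psiContrast hw hs heN hsb hbe, sum_mul_eq_mul_Sw fun _ _ _ => rfl,
    sum_mul_eq_mul_Sw fun _ _ _ => rfl, inv_mul_cancel_left₀ (Sw_pos hw hsb).ne',
    inv_mul_cancel_left₀ (Sw_pos hw (by omega)).ne', sub_self, mul_zero]

end Contrast

section SingleChange

variable {N : ℕ} {w : ℕ → ℝ} {s e b b' τ : ℕ} {x : ℕ → ℝ} {α β : ℝ}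

theorem winner_psiContrast_of_single_change_of_le (hw : ∀ i, 0 < w i) (hs : 1 ≤ s) (heN : e ≤ N)
    (hsb : s ≤ b) (hbτ : b ≤ τ) (hτe : τ < e)
    (hα : ∀ i, s ≤ i → i ≤ τ → x i = α) (hβ : ∀ i, τ < i → i ≤ e → x i = β) :
    winner N w x (psiContrast w s e b) =
      √(Sw w s b * Sw w (b + 1) e / Sw w s e) * ((α - β) * Sw w (τ + 1) e / Sw w (b + 1) e) := by
  have hleft : ∑ i ∈ Icc s b, w i * x i = Sw w s b * α :=
    sum_mul_eq_mul_Sw fun i hsi hib => hα i hsi (hib.trans hbτ)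
  have hright : ∑ i ∈ Icc (b + 1) e, w i * x i = Sw w (b + 1) τ * α + Sw w (τ + 1) e * β := by
    rw [← sum_Icc_consecutive _ (by omega) hτe.le, sum_mul_eq_mul_Sw fun i hbi hiτ =>
      hα i (by omega) hiτ, sum_mul_eq_mul_Sw fun i hτi hie => hβ i (by omega) hie]
  have hS₁ : Sw w s b ≠ 0 := (Sw_pos hw hsb).ne'
  have hS₂ : Sw w (b + 1) e ≠ 0 := (Sw_pos hw (by omega)).ne'
  rw [winner_psiContrast hw hs heN hsb (hbτ.trans_lt hτe), hleft, hright,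
    ← Sw_add_Sw (u := b + 1) (m := τ) (v := e) (by omega) hτe.le]
  rw [← Sw_add_Sw (u := b + 1) (m := τ) (v := e) (by omega) hτe.le] at hS₂
  field_simp
  ring

theorem winner_psiContrast_psiContrast (hw : ∀ i, 0 < w i) (hs : 1 ≤ s) (heN : e ≤ N)
    (hsb : s ≤ b) (hbb' : b ≤ b') (hb'e : b' < e) :
    winner N w (psiContrast w s e b') (psiContrast w s e b) =
      √(Sw w s b * Sw w (b' + 1) e / (Sw w s b' * Sw w (b + 1) e)) := by
  rw [winner_psiContrast_of_single_change_of_le hw hs heN hsb hbb' hb'e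
    (fun i hsi hib' => psiContrast_of_le hw hsi hib')
    (fun i hb'i hie => psiContrast_of_lt hw hb'i hie),
    ← Sw_add_Sw (u := s) (m := b') (v := e) (by omega) hb'e.le]
  have hS₁ := Sw_pos hw hsb
  have hS₂ := Sw_pos hw (show b + 1 ≤ e by omega)
  have hP := Sw_pos hw (hsb.trans hbb')
  have hQ := Sw_pos hw (show b' + 1 ≤ e by omega)
  set S₁ := Sw w s b
  set S₂ := Sw w (b + 1) e
  set P := Sw w s b'
  set Q := Sw w (b' + 1) e
  have hsplit : √(S₁ * S₂ / (P + Q)) * ((√(P * Q / (P + Q)) / P - -(√(P * Q / (P + Q)) / Q))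
      * Q / S₂) = √(S₁ * S₂ / (P + Q) * (P * Q / (P + Q)) * ((P + Q) / (P * S₂)) ^ 2) := by
    rw [Real.sqrt_mul (by positivity), Real.sqrt_mul (by positivity), Real.sqrt_sq (by positivity)]
    field_simp
    ring
  rw [hsplit]
  congr 1
  field_simp

theorem winner_psiContrast_self (hw : ∀ i, 0 < w i) (hs : 1 ≤ s) (heN : e ≤ N) (hsb : s ≤ b)
    (hbe : b < e) : winner N w (psiContrast w s e b) (psiContrast w s e b) = 1 := by
  rw [winner_psiContrast_psiContrast hw hs heN hsb le_rfl hbe,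
    div_self (mul_pos (Sw_pos hw hsb) (Sw_pos hw hbe)).ne', Real.sqrt_one]

theorem winner_psiContrast_psiContrast_nonneg (hw : ∀ i, 0 < w i) (hs : 1 ≤ s) (heN : e ≤ N)
    (hsb : s ≤ b) (hbe : b < e) (hsb' : s ≤ b') (hb'e : b' < e) :
    0 ≤ winner N w (psiContrast w s e b') (psiContrast w s e b) := by
  rcases le_total b b' with hbb' | hb'b
  · rw [winner_psiContrast_psiContrast hw hs heN hsb hbb' hb'e]
    exact Real.sqrt_nonneg _
  · rw [winner_comm, winner_psiContrast_psiContrast hw hs heN hsb' hb'b hbe]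
    exact Real.sqrt_nonneg _

theorem one_sub_sq_winner_psiContrast_psiContrast (hw : ∀ i, 0 < w i) (hs : 1 ≤ s)
    (heN : e ≤ N) (hsb : s ≤ b) (hbb' : b ≤ b') (hb'e : b' < e) :
    1 - winner N w (psiContrast w s e b') (psiContrast w s e b) ^ 2 =
      Sw w (b + 1) b' * Sw w s e / (Sw w s b' * Sw w (b + 1) e) := by
  have hP := Sw_pos hw (hsb.trans hbb')
  have hS₂ := Sw_pos hw (show b + 1 ≤ e by omega)
  have hS₁ := Sw_pos hw hsb
  have hQ := Sw_pos hw (show b' + 1 ≤ e by omega)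
  rw [winner_psiContrast_psiContrast hw hs heN hsb hbb' hb'e, Real.sq_sqrt (by positivity)]
  field_simp
  rw [← Sw_add_Sw (u := s) (m := b) (v := b') (by omega) hbb',
    ← Sw_add_Sw (u := b + 1) (m := b') (v := e) (by omega) hb'e.le,
    ← Sw_add_Sw (u := s) (m := b) (v := e) (by omega) (by omega),
    ← Sw_add_Sw (u := b + 1) (m := b') (v := e) (by omega) hb'e.le]
  ring

theorem winner_psiContrast_of_single_change (hw : ∀ i, 0 < w i) (hs : 1 ≤ s) (heN : e ≤ N)
    (hsτ : s ≤ τ) (hτe : τ < e)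
    (hα : ∀ i, s ≤ i → i ≤ τ → x i = α) (hβ : ∀ i, τ < i → i ≤ e → x i = β)
    (hsb : s ≤ b) (hbe : b < e) :
    winner N w x (psiContrast w s e b) = (α - β) * √(Sw w s τ * Sw w (τ + 1) e / Sw w s e) *
      winner N w (psiContrast w s e τ) (psiContrast w s e b) := by
  have hP := Sw_pos hw hsτ
  have hQ := Sw_pos hw (show τ + 1 ≤ e by omega)
  have hS : Sw w s τ + Sw w (τ + 1) e = Sw w s e := Sw_add_Sw (by omega) hτe.le
  have hT := Sw_pos hw (hsτ.trans hτe.le)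
  set k := √(Sw w s τ * Sw w (τ + 1) e / Sw w s e)
  have hk : k ^ 2 = Sw w s τ * Sw w (τ + 1) e / Sw w s e := Real.sq_sqrt (by positivity)
  have hdecomp : ∀ i ∈ Icc s e, x i = (α * Sw w s τ + β * Sw w (τ + 1) e) / Sw w s e
      + psiContrast w s e τ i * ((α - β) * k) := by
    intro i hi
    rw [mem_Icc] at hi
    rcases le_or_gt i τ with hiτ | hτi
    · rw [hα i hi.1 hiτ, psiContrast_of_le hw hi.1 hiτ,
        show k / Sw w s τ * ((α - β) * k) = (α - β) * k ^ 2 / Sw w s τ by ring, hk, ← hS]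
      field_simp
      ring
    · rw [hβ i hτi hi.2, psiContrast_of_lt hw hτi hi.2,
        show -(k / Sw w (τ + 1) e) * ((α - β) * k) = -((α - β) * k ^ 2 / Sw w (τ + 1) e) by ring,
        hk, ← hS]
      field_simp
      ring
  rw [winner_psiContrast_congr hs heN hsb hbe hdecomp, winner_add_left,
    winner_const_psiContrast hw hs heN hsb hbe, winner_mul_left, zero_add]

theorem lt_mul_one_sub_sq_winner_psiContrast
    (hw : ∀ i, 0 < w i) (hs : 1 ≤ s) (heN : e ≤ N) (hsτ : s ≤ τ) (hτe : τ < e) (hsb : s ≤ b)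
    (hbe : b < e) {c k : ℝ} (hc : 0 ≤ c) (hk : 0 ≤ k)
    (hmin : 2 * c < min (Sw w s τ) (Sw w (τ + 1) e) * k)
    (hgap : 2 * c < Sw w (min τ b + 1) (max τ b) * k) :
    c < k * (Sw w s τ * Sw w (τ + 1) e / Sw w s e) *
      (1 - winner N w (psiContrast w s e τ) (psiContrast w s e b) ^ 2) := by
  have hP := Sw_pos hw hsτ
  have hQ := Sw_pos hw (show τ + 1 ≤ e by omega)
  have hT := Sw_pos hw (hsτ.trans hτe.le)
  rcases le_total b τ with hbτ | hτb
  · rw [min_eq_right hbτ, max_eq_left hbτ] at hgap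
    have hS₂ := Sw_pos hw (show b + 1 ≤ e by omega)
    have hQk := hmin.trans_le (mul_le_mul_of_nonneg_right (min_le_right _ _) hk)
    refine (lt_mul_mul_div_add hc hk hgap hQk).trans_eq ?_
    rw [one_sub_sq_winner_psiContrast_psiContrast hw hs heN hsb hbτ hτe,
      Sw_add_Sw (by omega) hτe.le]
    field_simp
  · rw [min_eq_left hτb, max_eq_right hτb] at hgap
    have hS₁ := Sw_pos hw hsb
    have hPk := hmin.trans_le (mul_le_mul_of_nonneg_right (min_le_left _ _) hk)
    refine (lt_mul_mul_div_add hc hk hPk hgap).trans_eq ?_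
    rw [winner_comm, one_sub_sq_winner_psiContrast_psiContrast hw hs heN hsτ hτb hbe,
      Sw_add_Sw (by omega) hτb]
    field_simp

end SingleChange

noncomputable def projDiff (N : ℕ) (w μ : ℕ → ℝ) (s e τ b : ℕ) : ℕ → ℝ := fun i =>
  psiContrast w s e τ i * winner N w (psiContrast w s e τ) μ
    - psiContrast w s e b i * winner N w (psiContrast w s e b) μ

section Localization

variable {N : ℕ} {w μ : ℕ → ℝ} {s e τ b : ℕ} {α β : ℝ}

theorem winner_psiContrast_eq_mul_of_single_change (hw : ∀ i, 0 < w i) (hs : 1 ≤ s)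
    (heN : e ≤ N) (hsτ : s ≤ τ) (hτe : τ < e)
    (hα : ∀ i, s ≤ i → i ≤ τ → μ i = α) (hβ : ∀ i, τ < i → i ≤ e → μ i = β)
    (hsb : s ≤ b) (hbe : b < e) :
    winner N w (psiContrast w s e b) μ = winner N w (psiContrast w s e τ) μ *
      winner N w (psiContrast w s e τ) (psiContrast w s e b) := by
  rw [winner_comm, winner_psiContrast_of_single_change hw hs heN hsτ hτe hα hβ hsb hbe,
    winner_comm _ μ, winner_psiContrast_of_single_change hw hs heN hsτ hτe hα hβ hsτ hτe,
    winner_psiContrast_self hw hs heN hsτ hτe, mul_one]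

theorem winner_projDiff_self_eq_sq_sub_sq (hw : ∀ i, 0 < w i) (hs : 1 ≤ s)
    (heN : e ≤ N) (hsτ : s ≤ τ) (hτe : τ < e)
    (hα : ∀ i, s ≤ i → i ≤ τ → μ i = α) (hβ : ∀ i, τ < i → i ≤ e → μ i = β)
    (hsb : s ≤ b) (hbe : b < e) :
    winner N w (projDiff N w μ s e τ b) (projDiff N w μ s e τ b) =
      winner N w (psiContrast w s e τ) μ ^ 2 - winner N w (psiContrast w s e b) μ ^ 2 :=
  winner_mul_sub_mul_self (winner_psiContrast_self hw hs heN hsτ hτe)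
    (winner_psiContrast_self hw hs heN hsb hbe)
    (winner_psiContrast_eq_mul_of_single_change hw hs heN hsτ hτe hα hβ hsb hbe)

theorem winner_projDiff_self_eq_mul_one_sub_sq (hw : ∀ i, 0 < w i) (hs : 1 ≤ s)
    (heN : e ≤ N) (hsτ : s ≤ τ) (hτe : τ < e)
    (hα : ∀ i, s ≤ i → i ≤ τ → μ i = α) (hβ : ∀ i, τ < i → i ≤ e → μ i = β)
    (hsb : s ≤ b) (hbe : b < e) :
    winner N w (projDiff N w μ s e τ b) (projDiff N w μ s e τ b) =
      (α - β) ^ 2 * (Sw w s τ * Sw w (τ + 1) e / Sw w s e) *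
        (1 - winner N w (psiContrast w s e τ) (psiContrast w s e b) ^ 2) := by
  have hP := Sw_pos hw hsτ
  have hQ := Sw_pos hw (show τ + 1 ≤ e by omega)
  have hT := Sw_pos hw (hsτ.trans hτe.le)
  have hk : √(Sw w s τ * Sw w (τ + 1) e / Sw w s e) ^ 2 = Sw w s τ * Sw w (τ + 1) e / Sw w s e :=
    Real.sq_sqrt (by positivity)
  rw [winner_projDiff_self_eq_sq_sub_sq hw hs heN hsτ hτe hα hβ hsb hbe,
    winner_psiContrast_eq_mul_of_single_change hw hs heN hsτ hτe hα hβ hsb hbe, winner_comm _ μ,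
    winner_psiContrast_of_single_change hw hs heN hsτ hτe hα hβ hsτ hτe,
    winner_psiContrast_self hw hs heN hsτ hτe, mul_one]
  linear_combination (α - β) ^ 2 *
    (1 - winner N w (psiContrast w s e τ) (psiContrast w s e b) ^ 2) * hk

theorem wnorm_projDiff_le (hw : ∀ i, 0 < w i) (hs : 1 ≤ s)
    (heN : e ≤ N) (hsτ : s ≤ τ) (hτe : τ < e)
    (hα : ∀ i, s ≤ i → i ≤ τ → μ i = α) (hβ : ∀ i, τ < i → i ≤ e → μ i = β)
    (hsb : s ≤ b) (hbe : b < e) {ε : ℕ → ℝ} {r : ℝ}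
    (hετ : |winner N w ε (psiContrast w s e τ)| ≤ r)
    (hεb : |winner N w ε (psiContrast w s e b)| ≤ r)
    (hεv : wnorm N w (projDiff N w μ s e τ b) ≠ 0 →
      |winner N w (projDiff N w μ s e τ b) ε| ≤ r * wnorm N w (projDiff N w μ s e τ b))
    (hmax : wCUSUM w (fun i => μ i + ε i) s e τ ≤ wCUSUM w (fun i => μ i + ε i) s e b) :
    wnorm N w (projDiff N w μ s e τ b) ≤ (1 + √2) * r := by
  set t := wnorm N w (projDiff N w μ s e τ b)
  have ht : t ^ 2 =
      winner N w (psiContrast w s e τ) μ ^ 2 - winner N w (psiContrast w s e b) μ ^ 2 := by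
    rw [wnorm_sq (fun i => (hw i).le),
      winner_projDiff_self_eq_sq_sub_sq hw hs heN hsτ hτe hα hβ hsb hbe]
  rcases eq_or_ne t 0 with ht0 | ht0
  · rw [ht0]
    have hr : 0 ≤ r := (abs_nonneg _).trans hετ
    positivity
  have hsignal : ∀ b', winner N w (fun i => μ i + ε i) (psiContrast w s e b') =
      winner N w (psiContrast w s e b') μ + winner N w ε (psiContrast w s e b') := fun b' => by
    rw [winner_add_left, winner_comm μ]
  have hvμ : winner N w (projDiff N w μ s e τ b) μ = t ^ 2 := by
    rw [ht]
    unfold projDiff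
    rw [winner_sub_left, winner_mul_left, winner_mul_left]
    ring
  have hvY : winner N w (projDiff N w μ s e τ b) (fun i => μ i + ε i) =
      winner N w (psiContrast w s e τ) μ * winner N w (fun i => μ i + ε i) (psiContrast w s e τ)
        - winner N w (psiContrast w s e b) μ
          * winner N w (fun i => μ i + ε i) (psiContrast w s e b) := by
    unfold projDiff
    rw [winner_sub_left, winner_mul_left, winner_mul_left,
      winner_comm (psiContrast w s e τ) (fun i => μ i + ε i),
      winner_comm (psiContrast w s e b) (fun i => μ i + ε i)]
  apply le_one_add_sqrt_two_mul (a := winner N w (psiContrast w s e τ) μ)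
    (c := winner N w (psiContrast w s e b) μ)
    (y₁ := winner N w (fun i => μ i + ε i) (psiContrast w s e τ))
    (y₂ := winner N w (fun i => μ i + ε i) (psiContrast w s e b))
  · rw [winner_psiContrast_eq_mul_of_single_change hw hs heN hsτ hτe hα hβ hsb hbe, ← mul_assoc]
    exact mul_nonneg (mul_self_nonneg _)
      (winner_psiContrast_psiContrast_nonneg hw hs heN hsb hbe hsτ hτe)
  · exact Real.sqrt_nonneg _
  · linarith
  · rwa [hsignal, add_sub_cancel_left]
  · rwa [hsignal, add_sub_cancel_left]
  · rwa [wCUSUM_eq_abs_winner hw hs heN hsτ hτe, wCUSUM_eq_abs_winner hw hs heN hsb hbe] at hmax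
  · rw [← hvY, winner_comm, winner_add_left, winner_comm μ, hvμ, winner_comm ε]
    linarith [neg_le_of_abs_le (hεv ht0)]

end Localization

theorem deterministic_cusum_maximizer_localization_general
    (N : ℕ) (w : ℕ → ℝ) (hw : ∀ i, 0 < w i)
    (μvec : ℕ → ℝ) (s e τ : ℕ)
    (hs : 1 ≤ s) (hsτ : s ≤ τ) (hτe : τ < e) (heN : e ≤ N)
    (α β : ℝ)
    (hα : ∀ i, s ≤ i → i ≤ τ → μvec i = α)
    (hβ : ∀ i, τ < i → i ≤ e → μvec i = β)
    (hκ : 0 < |α - β|)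
    (ε Y : ℕ → ℝ) (hY : ∀ i, Y i = μvec i + ε i)
    (r : ℝ)
    (hεψ : ∀ b, s ≤ b → b < e → |winner N w ε (psiContrast w s e b)| ≤ r)
    (hεv : ∀ b, s ≤ b → b < e →
      wnorm N w (fun i =>
        psiContrast w s e τ i * winner N w (psiContrast w s e τ) μvec
          - psiContrast w s e b i * winner N w (psiContrast w s e b) μvec) ≠ 0 →
      |winner N w (fun i =>
        psiContrast w s e τ i * winner N w (psiContrast w s e τ) μvec
          - psiContrast w s e b i * winner N w (psiContrast w s e b) μvec) ε|
        ≤ r * wnorm N w (fun i =>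
            psiContrast w s e τ i * winner N w (psiContrast w s e τ) μvec
              - psiContrast w s e b i * winner N w (psiContrast w s e b) μvec))
    (hsnr : min (Sw w s τ) (Sw w (τ + 1) e) * |α - β| ^ 2
      > 2 * (1 + Real.sqrt 2) ^ 2 * r ^ 2)
    (bhat : ℕ) (hbhat1 : s ≤ bhat) (hbhat2 : bhat < e)
    (hbhat_max : ∀ b, s ≤ b → b < e → wCUSUM w Y s e b ≤ wCUSUM w Y s e bhat) :
    ∑ i ∈ Finset.Icc (min τ bhat + 1) (max τ bhat), w i
      ≤ 2 * (1 + Real.sqrt 2) ^ 2 * r ^ 2 / |α - β| ^ 2 := by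
  by_contra! hfar
  rw [div_lt_iff₀ (pow_pos hκ 2)] at hfar
  obtain rfl : Y = fun i => μvec i + ε i := funext hY
  have hnorm := wnorm_projDiff_le hw hs heN hsτ hτe hα hβ hbhat1 hbhat2 (hεψ τ hsτ hτe)
    (hεψ bhat hbhat1 hbhat2) (hεv bhat hbhat1 hbhat2) (hbhat_max τ hsτ hτe)
  have hgap := lt_mul_one_sub_sq_winner_psiContrast (N := N) hw hs heN hsτ hτe hbhat1 hbhat2
    (c := (1 + √2) ^ 2 * r ^ 2) (by positivity) (sq_nonneg |α - β|) (by linarith)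
    (by unfold Sw; linarith)
  rw [sq_abs, ← winner_projDiff_self_eq_mul_one_sub_sq hw hs heN hsτ hτe hα hβ hbhat1 hbhat2,
    ← wnorm_sq (fun i => (hw i).le), ← mul_pow] at hgap
  exact (lt_of_pow_lt_pow_left₀ 2 (Real.sqrt_nonneg _) hgap).not_ge hnorm

/-- **Deterministic localization of the weighted CUSUM maximizer under noise
control (Step Four of the proof of Theorem 2).** Suppose `μ` has a single change
at `τ` on `[s,e]` with `κ = |α - β| > 0`, `Y = μ + ε`, and `r > 0`. Assume for
every `s ≤ b < e` that `|⟨ε,ψ^{b}⟩_w| ≤ r` and that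
`|⟨v_b,ε⟩_w| ≤ r·‖v_b‖_w` whenever
`v_b = ψ^{τ}⟨ψ^{τ},μ⟩_w − ψ^{b}⟨ψ^{b},μ⟩_w ≠ 0`. If
`min{S^w_{s:τ}, S^w_{(τ+1):e}}·κ² > 2(1+√2)²·r²`, then every maximizer `b̂` of
`b ↦ W_{s,e}^{Y}(b)` over `s ≤ b < e` satisfies
`Σ_{min(τ,b̂) < i ≤ max(τ,b̂)} w_i ≤ 2(1+√2)²·r²/κ²`. -/
theorem deterministic_cusum_maximizer_localization
    (N : ℕ) (w : ℕ → ℝ) (hw : ∀ i, 0 < w i)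
    (μvec : ℕ → ℝ) (s e τ : ℕ)
    (hs : 1 ≤ s) (hsτ : s ≤ τ) (hτe : τ < e) (heN : e ≤ N)
    (α β : ℝ)
    (hα : ∀ i, s ≤ i → i ≤ τ → μvec i = α)
    (hβ : ∀ i, τ < i → i ≤ e → μvec i = β)
    (hκ : 0 < |α - β|)
    (ε Y : ℕ → ℝ) (hY : ∀ i, Y i = μvec i + ε i)
    (r : ℝ) (hr : 0 < r)
    (hεψ : ∀ b, s ≤ b → b < e → |winner N w ε (psiContrast w s e b)| ≤ r)
    (hεv : ∀ b, s ≤ b → b < e →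
      wnorm N w (fun i =>
        psiContrast w s e τ i * winner N w (psiContrast w s e τ) μvec
          - psiContrast w s e b i * winner N w (psiContrast w s e b) μvec) ≠ 0 →
      |winner N w (fun i =>
        psiContrast w s e τ i * winner N w (psiContrast w s e τ) μvec
          - psiContrast w s e b i * winner N w (psiContrast w s e b) μvec) ε|
        ≤ r * wnorm N w (fun i =>
            psiContrast w s e τ i * winner N w (psiContrast w s e τ) μvec
              - psiContrast w s e b i * winner N w (psiContrast w s e b) μvec))
    (hsnr : min (Sw w s τ) (Sw w (τ + 1) e) * |α - β| ^ 2
      > 2 * (1 + Real.sqrt 2) ^ 2 * r ^ 2)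
    (bhat : ℕ) (hbhat1 : s ≤ bhat) (hbhat2 : bhat < e)
    (hbhat_max : ∀ b, s ≤ b → b < e → wCUSUM w Y s e b ≤ wCUSUM w Y s e bhat) :
    ∑ i ∈ Finset.Icc (min τ bhat + 1) (max τ bhat), w i
      ≤ 2 * (1 + Real.sqrt 2) ^ 2 * r ^ 2 / |α - β| ^ 2 :=
  deterministic_cusum_maximizer_localization_general N w hw μvec s e τ hs hsτ hτe heN α β hα hβ hκ ε
    Y hY r hεψ hεv hsnr bhat hbhat1 hbhat2 hbhat_max
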